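/- arXiv:0911.1813 — 5 statements merged into one kernel-verified Lean document; each statement's English description precedes it below -/
import Mathlib

section
/- Let X be a nonempty finite set, D a nonempty finite multiset over X, and f_1,…,f_k : X → {0,1} predicates with k ≥ 1. Let ε ∈ (0,1) and let s be a positive integer with s ≥ (1/(2ε²))·ln(4k). Then there exists a multiset S over X with |S| = s such that |f_i(D) − f_i(S)| ≤ ε for every i ∈ {1,…,k}. -/
/-- The fraction of elements of the multiset `D` (counted with multiplicity) satisfying the
predicate `f`. -/
noncomputable def multisetFrac {X : Type*} (f : X → Bool) (D : Multiset X) : ℝ :=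
  (D.countP (fun x => f x = true) : ℝ) / (Multiset.card D : ℝ)

/-!
Draw `s` elements of `D` independently, each uniformly with multiplicity. For each predicate,
the frequency in the sample is the mean of `s` independent `[0, 1]`-valued variables with
expectation `f(D)`, so by Hoeffding's inequality it is `ε`-far from `f(D)` with probability at
most `2 exp(-2sε²)`. The bound on `s` makes the union of these `k` events have probability at
most `2k exp(-2sε²) ≤ 1/2`, so some sample avoids all of them.
-/

open MeasureTheory ProbabilityTheory Real
open scoped NNReal ENNReal

lemma ProbabilityTheory.HasSubgaussianMGF.measure_abs_sum_ge_le_of_iIndepFun {Ω ι : Type*}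
    {mΩ : MeasurableSpace Ω} {μ : Measure Ω} {X : ι → Ω → ℝ} (h_indep : iIndepFun X μ)
    {c : ι → ℝ≥0} {s : Finset ι} (h_subG : ∀ i ∈ s, HasSubgaussianMGF (X i) (c i) μ)
    {ε : ℝ} (hε : 0 ≤ ε) :
    μ.real {ω | ε ≤ |∑ i ∈ s, X i ω|} ≤ 2 * exp (-ε ^ 2 / (2 * ∑ i ∈ s, c i)) := by
  have h_indep_neg : iIndepFun (fun i ω ↦ -X i ω) μ :=
    h_indep.comp (fun _ x ↦ -x) fun _ ↦ measurable_neg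
  have h_split : {ω | ε ≤ |∑ i ∈ s, X i ω|} =
      {ω | ε ≤ ∑ i ∈ s, X i ω} ∪ {ω | ε ≤ ∑ i ∈ s, -X i ω} := by
    ext ω
    simp only [Set.mem_ofPred_eq, Set.mem_union, Finset.sum_neg_distrib, le_abs]
  rw [h_split, two_mul]
  refine (measureReal_union_le _ _).trans (add_le_add ?_ ?_)
  · exact measure_sum_ge_le_of_iIndepFun h_indep h_subG hε
  · exact measure_sum_ge_le_of_iIndepFun h_indep_neg (fun i hi ↦ (h_subG i hi).neg) hε

lemma measureReal_abs_sum_sub_integral_ge_le {X ι : Type*} [Fintype ι] {mX : MeasurableSpace X}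
    {ν : Measure X} [IsProbabilityMeasure ν] {g : X → ℝ} (hg : Measurable g)
    (hg_mem : ∀ x, g x ∈ Set.Icc (0 : ℝ) 1) {ε : ℝ} (hε : 0 ≤ ε) :
    (Measure.pi fun _ : ι ↦ ν).real
        {ω | Fintype.card ι * ε ≤ |∑ i, (g (ω i) - ∫ x, g x ∂ν)|}
      ≤ 2 * exp (-2 * Fintype.card ι * ε ^ 2) := by
  have h_subG : HasSubgaussianMGF (fun x ↦ g x - ∫ x, g x ∂ν) ((‖(1 : ℝ) - 0‖₊ / 2) ^ 2) ν :=
    hasSubgaussianMGF_of_mem_Icc hg.aemeasurable (ae_of_all _ hg_mem)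
  have h_subG_pi (i : ι) : HasSubgaussianMGF (fun ω ↦ g (ω i) - ∫ x, g x ∂ν)
      ((‖(1 : ℝ) - 0‖₊ / 2) ^ 2) (Measure.pi fun _ : ι ↦ ν) := by
    have h_eval := measurePreserving_eval (fun _ : ι ↦ ν) i
    exact HasSubgaussianMGF.of_map (X := fun x ↦ g x - ∫ x, g x ∂ν)
      h_eval.measurable.aemeasurable (by rwa [h_eval.map_eq])
  have h_indep : iIndepFun (fun i ω ↦ g (ω i) - ∫ x, g x ∂ν) (Measure.pi fun _ : ι ↦ ν) :=
    iIndepFun_pi fun _ ↦ (hg.sub_const _).aemeasurable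
  refine (HasSubgaussianMGF.measure_abs_sum_ge_le_of_iIndepFun h_indep (fun i _ ↦ h_subG_pi i)
    (by positivity)).trans_eq ?_
  congr 2
  rcases (Fintype.card ι).eq_zero_or_pos with h | h
  · simp [h]
  · simp only [Finset.sum_const, Finset.card_univ, nsmul_eq_mul, NNReal.coe_mul,
      NNReal.coe_natCast, NNReal.coe_pow, NNReal.coe_div, coe_nnnorm, sub_zero, norm_one,
      NNReal.coe_ofNat]
    field_simp

lemma Multiset.tsum_count {α : Type*} [DecidableEq α] (m : Multiset α) :
    ∑' x, (m.count x : ℝ≥0∞) = Multiset.card m := by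
  rw [tsum_eq_sum (s := m.toFinset) fun x hx ↦ by simpa using hx, ← Nat.cast_sum,
    Multiset.toFinset_sum_count_eq]

lemma PMF.toMeasure_ofMultiset_apply_eq_countP {X : Type*} [MeasurableSpace X]
    {D : Multiset X} (hD : D ≠ 0) (p : X → Prop) [DecidablePred p]
    (hp : MeasurableSet {x | p x}) :
    (PMF.ofMultiset D hD).toMeasure {x | p x} = D.countP p / Multiset.card D := by
  classical
  rw [PMF.toMeasure_ofMultiset_apply hD _ hp, Multiset.tsum_count, Multiset.countP_eq_card_filter]
  -- the two filters differ only in their decidability instances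
  congr!

lemma PMF.integral_ofMultiset_ite {X : Type*} [MeasurableSpace X] [DiscreteMeasurableSpace X]
    {D : Multiset X} (hD : D ≠ 0) (p : X → Bool) :
    ∫ x, (if p x then (1 : ℝ) else 0) ∂(PMF.ofMultiset D hD).toMeasure = multisetFrac p D := by
  have hp : MeasurableSet {x | p x = true} := .of_discrete
  have h_ite : (fun x ↦ if p x then (1 : ℝ) else 0) = {x | p x = true}.indicator 1 := by
    ext x
    simp [Set.indicator_apply]
  rw [h_ite, integral_indicator_one hp, Measure.real,
    PMF.toMeasure_ofMultiset_apply_eq_countP hD _ hp, multisetFrac, ENNReal.toReal_div]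
  simp

lemma multisetFrac_map_univ {X ι : Type*} [Fintype ι] (p : X → Bool) (ω : ι → X) :
    multisetFrac p (Finset.univ.val.map ω) =
      (∑ i, if p (ω i) then (1 : ℝ) else 0) / Fintype.card ι := by
  classical
  rw [multisetFrac, Multiset.countP_map, Multiset.card_map, ← Finset.natCast_card_filter]
  rfl

lemma abs_sub_sum_div_card_le_of_abs_sum_sub_lt {ι : Type*} [Fintype ι] {y : ι → ℝ} {a ε : ℝ}
    (h : |∑ i, (y i - a)| < Fintype.card ι * ε) :
    |a - (∑ i, y i) / Fintype.card ι| ≤ ε := by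
  have hn : (0 : ℝ) < Fintype.card ι := by
    have hnε := (abs_nonneg _).trans_lt h
    refine (Nat.cast_nonneg _).lt_of_ne fun hn ↦ ?_
    rw [← hn, zero_mul] at hnε
    exact hnε.false
  rw [Finset.sum_sub_distrib, Finset.sum_const, Finset.card_univ, nsmul_eq_mul] at h
  rw [abs_sub_comm, div_sub' hn.ne', abs_div, abs_of_pos hn, div_le_iff₀ hn]
  linarith

lemma two_mul_mul_exp_neg_lt_one {k : ℕ} {t : ℝ} (h : log (4 * k) ≤ t) :
    2 * k * exp (-t) < 1 := by
  rcases k.eq_zero_or_pos with rfl | hk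
  · simp
  have h4k : (0 : ℝ) < 4 * k := by positivity
  have h_exp : exp (-t) ≤ (4 * k : ℝ)⁻¹ := by
    rw [← exp_log h4k, ← exp_neg]
    exact exp_le_exp.2 (neg_le_neg h)
  calc 2 * k * exp (-t) ≤ 2 * k * (4 * k : ℝ)⁻¹ := by gcongr
    _ = 1 / 2 := by field_simp; ring
    _ < 1 := by norm_num

theorem small_database_exists_general {X : Type*}
    (D : Multiset X) (hD : D ≠ 0) (k : ℕ) (f : Fin k → X → Bool)
    (ε : ℝ) (hε : 0 < ε ∧ ε < 1)
    (s : ℕ) (hs2 : (1 / (2 * ε ^ 2)) * Real.log (4 * k) ≤ (s : ℝ)) :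
    ∃ S : Multiset X, Multiset.card S = s ∧
      ∀ i : Fin k, |multisetFrac (f i) D - multisetFrac (f i) S| ≤ ε := by
  obtain ⟨hε₀, -⟩ := hε
  let _ : MeasurableSpace X := ⊤
  let ν := (PMF.ofMultiset D hD).toMeasure
  let μ := Measure.pi fun _ : Fin s ↦ ν
  let χ (i : Fin k) (x : X) : ℝ := if f i x then 1 else 0
  let bad (i : Fin k) : Set (Fin s → X) :=
    {ω | s * ε ≤ |∑ j, (χ i (ω j) - ∫ x, χ i x ∂ν)|}
  have h_log : log (4 * k) ≤ 2 * s * ε ^ 2 := by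
    rw [one_div, inv_mul_le_iff₀ (by positivity)] at hs2
    linarith
  have h_bad : μ.real (⋃ i, bad i) < 1 :=
    calc _ ≤ ∑ i, μ.real (bad i) := measureReal_iUnion_fintype_le _
      _ ≤ ∑ _i : Fin k, 2 * exp (-2 * s * ε ^ 2) := by
        refine Finset.sum_le_sum fun i _ ↦ ?_
        simpa only [Fintype.card_fin] using measureReal_abs_sum_sub_integral_ge_le (ν := ν)
          (ι := Fin s) measurable_from_top
          (fun x ↦ by by_cases h : f i x <;> simp [χ, h]) hε₀.le
      _ = 2 * k * exp (-(2 * s * ε ^ 2)) := by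
        rw [Finset.sum_const, Finset.card_univ, Fintype.card_fin, nsmul_eq_mul, neg_mul,
          neg_mul]
        ring
      _ < 1 := two_mul_mul_exp_neg_lt_one h_log
  obtain ⟨ω, hω⟩ : ∃ ω, ω ∉ ⋃ i, bad i := by
    by_contra! h
    rw [Set.eq_univ_of_forall h, probReal_univ] at h_bad
    exact h_bad.false
  refine ⟨Finset.univ.val.map ω, by simp, fun i ↦ ?_⟩
  rw [← PMF.integral_ofMultiset_ite hD, multisetFrac_map_univ]
  refine abs_sub_sum_div_card_le_of_abs_sum_sub_lt ?_
  have h_good : ω ∉ bad i := fun h ↦ hω (Set.mem_iUnion.2 ⟨i, h⟩)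
  simpa only [bad, Set.mem_ofPred_eq, not_le, Fintype.card_fin] using h_good

/-- **Existence part of Proposition 4 (uniform convergence).** For any nonempty database `D`
over a nonempty finite set `X`, any `k ≥ 1` predicates, any `ε ∈ (0,1)` and any positive
integer `s ≥ (1/(2ε²))·ln(4k)`, there is a multiset `S` over `X` of size `s` whose answers to
all `k` predicate queries agree with those of `D` up to `± ε`. -/
theorem small_database_exists {X : Type*} [Fintype X] [Nonempty X]
    (D : Multiset X) (hD : D ≠ 0) (k : ℕ) (hk : 1 ≤ k) (f : Fin k → X → Bool)
    (ε : ℝ) (hε : 0 < ε ∧ ε < 1)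
    (s : ℕ) (hs : 0 < s) (hs2 : (1 / (2 * ε ^ 2)) * Real.log (4 * k) ≤ (s : ℝ)) :
    ∃ S : Multiset X, Multiset.card S = s ∧
      ∀ i : Fin k, |multisetFrac (f i) D - multisetFrac (f i) S| ≤ ε :=
  small_database_exists_general D hD k f ε hε s hs2
end

section
/- Let C be a nonempty finite set, g : C → ℝ, and let ε > 0 and n > 0 be real numbers with ε·n ≥ 1. For x ∈ ℝ define r(x) = (1/#C)·∑_{S ∈ C} exp(−|x − g(S)|/ε). Then for all x, x′ ∈ ℝ with |x − x′| ≤ 1/n, we have r(x) ≤ r(x′) + 2/(ε n). In particular the function r has sensitivity at most 2/(ε n) with respect to changes of its argument by at most 1/n. -/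
/-!
Moving the centre from `x'` to `x` changes each exponent `-|x - g S| / ε` by at most
`|x - x'| / ε ≤ 1 / (ε n) =: u`, so `r x ≤ exp u * r x'`. For `u ∈ [0, 1]` we have
`exp u ≤ 1 + 2 u`, and `r x' ≤ 1`, whence `r x ≤ r x' + 2 u`.
-/

open Finset

lemma Real.exp_le_one_add_two_mul {u : ℝ} (h0 : 0 ≤ u) (h1 : u ≤ 1) :
    Real.exp u ≤ 1 + 2 * u := by
  simpa [mul_comm, one_add_one_eq_two] using Real.exp_bound' h0 h1 one_pos

lemma Real.exp_neg_abs_sub_div_le {ε : ℝ} (hε : 0 ≤ ε) (x x' a : ℝ) :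
    Real.exp (-|x - a| / ε) ≤ Real.exp (|x - x'| / ε) * Real.exp (-|x' - a| / ε) := by
  rw [← Real.exp_add, Real.exp_le_exp, ← add_div]
  refine div_le_div_of_nonneg_right ?_ hε
  have := abs_sub_abs_le_abs_sub (x' - a) (x - a)
  rw [show x' - a - (x - a) = -(x - x') by ring, abs_neg] at this
  linarith

section MedianScore

variable {α : Type*} (C : Finset α) (g : α → ℝ) {ε : ℝ}

/-- The score `r(x)` of the median mechanism. -/
noncomputable def medianScore (ε x : ℝ) : ℝ :=
  (1 / (#C : ℝ)) * ∑ S ∈ C, Real.exp (-|x - g S| / ε)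

lemma medianScore_nonneg (ε x : ℝ) : 0 ≤ medianScore C g ε x :=
  mul_nonneg (by positivity) (sum_nonneg fun _ _ ↦ (Real.exp_pos _).le)

lemma medianScore_le_one (hε : 0 ≤ ε) (x : ℝ) : medianScore C g ε x ≤ 1 := by
  have hterm : ∀ S ∈ C, Real.exp (-|x - g S| / ε) ≤ 1 := fun S _ ↦
    Real.exp_le_one_iff.2 (div_nonpos_of_nonpos_of_nonneg (neg_nonpos.2 (abs_nonneg _)) hε)
  calc medianScore C g ε x ≤ (1 / (#C : ℝ)) * (#C • (1 : ℝ)) :=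
        mul_le_mul_of_nonneg_left (sum_le_card_nsmul _ _ _ hterm) (by positivity)
    _ = (#C : ℝ) * (#C : ℝ)⁻¹ := by rw [nsmul_one, one_div, mul_comm]
    _ ≤ 1 := mul_inv_le_one

lemma medianScore_le_exp_mul (hε : 0 ≤ ε) (x x' : ℝ) :
    medianScore C g ε x ≤ Real.exp (|x - x'| / ε) * medianScore C g ε x' := by
  rw [medianScore, medianScore, mul_left_comm]
  gcongr
  rw [mul_sum]
  exact sum_le_sum fun S _ ↦ Real.exp_neg_abs_sub_div_le hε x x' (g S)

end MedianScore

theorem median_mechanism_score_sensitivity_general {α : Type*} (C : Finset α)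
    (g : α → ℝ) (ε n : ℝ) (hε : 0 < ε) (hn : 0 < n) (hεn : 1 ≤ ε * n)
    (x x' : ℝ) (hxx' : |x - x'| ≤ 1 / n) :
    (1 / (C.card : ℝ)) * ∑ S ∈ C, Real.exp (-|x - g S| / ε) ≤
      (1 / (C.card : ℝ)) * ∑ S ∈ C, Real.exp (-|x' - g S| / ε) + 2 / (ε * n) := by
  change medianScore C g ε x ≤ medianScore C g ε x' + 2 / (ε * n)
  set u := 1 / (ε * n)
  have hu_nonneg : 0 ≤ u := by positivity
  have hu_le_one : u ≤ 1 := div_le_one_of_le₀ hεn (by positivity)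
  have hshift : |x - x'| / ε ≤ u := by
    rw [div_le_iff₀ hε]
    calc |x - x'| ≤ 1 / n := hxx'
      _ = u * ε := by simp only [u]; field_simp
  have hr'_nonneg := medianScore_nonneg C g ε x'
  have hr'_le_one := medianScore_le_one C g hε.le x'
  calc medianScore C g ε x ≤ Real.exp u * medianScore C g ε x' :=
        (medianScore_le_exp_mul C g hε.le x x').trans
          (mul_le_mul_of_nonneg_right (Real.exp_le_exp.2 hshift) hr'_nonneg)
    _ ≤ (1 + 2 * u) * medianScore C g ε x' :=
        mul_le_mul_of_nonneg_right (Real.exp_le_one_add_two_mul hu_nonneg hu_le_one) hr'_nonneg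
    _ ≤ medianScore C g ε x' + 2 * u := by nlinarith
    _ = medianScore C g ε x' + 2 / (ε * n) := by ring

/-- **Lemma 7 (sensitivityLemma).** For a nonempty finite set `C`, `g : C → ℝ`, and reals
`ε > 0`, `n > 0` with `ε·n ≥ 1`, the function `r x = (1/#C) · ∑_{S∈C} exp(−|x − g S|/ε)`
has sensitivity at most `2/(εn)` with respect to changes of its argument by at most `1/n`:
if `|x − x′| ≤ 1/n` then `r x ≤ r x′ + 2/(εn)`. -/
theorem median_mechanism_score_sensitivity {α : Type*} (C : Finset α) (hC : C.Nonempty)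
    (g : α → ℝ) (ε n : ℝ) (hε : 0 < ε) (hn : 0 < n) (hεn : 1 ≤ ε * n)
    (x x' : ℝ) (hxx' : |x - x'| ≤ 1 / n) :
    (1 / (C.card : ℝ)) * ∑ S ∈ C, Real.exp (-|x - g S| / ε) ≤
      (1 / (C.card : ℝ)) * ∑ S ∈ C, Real.exp (-|x' - g S| / ε) + 2 / (ε * n) :=
  median_mechanism_score_sensitivity_general C g ε n hε hn hεn x x' hxx'
end

section
/- Let X be a finite set with N = |X| ≥ 1, let f_1,…,f_k : X → {0,1} be predicates with k ≥ 1, let ε′ ∈ (0,1], and let m be a positive integer with m ≥ 8·ln(2k)/ε′². Let C_0 = {F ∈ ℝ^X : F_x ≥ 0 for all x and ∑_x F_x ≤ m}, and for F ∈ C_0 define f_i(F) = (1/m)·∑_{x : f_i(x)=1} F_x. Then for every F ∈ C_0 there exists a point G ∈ C_0 whose coordinates are all nonnegative integers such that |f_i(F) − f_i(G)| ≤ ε′ for every i ∈ {1,…,k}. -/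
/-!
Draw `m` independent samples from the law giving each `x` mass `F x / m` and the leftover mass
`1 - ∑ F / m` to an extra point `none`, and let `G x` count the samples equal to `x`. Each query
value of `G` is then the sample mean of a `[0, 1]`-valued variable whose expectation is the query
value of `F`, so by Hoeffding's inequality it is `ε'`-far from it with probability at most
`2 exp (-2 ε'² m)`. Since `ε'² m ≥ 8 log (2k)`, a union bound over the `k` queries leaves positive
probability for a sample whose counts are `ε'`-close in every query.
-/

/-- The value of the predicate query `f` on the fractional histogram `F`, scaled by the
histogram size bound `m`: `f(F) = (1/m)·∑_{x : f(x)=1} F x`. -/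
noncomputable def histQuery {X : Type*} [Fintype X] (m : ℕ) (f : X → Bool) (F : X → ℝ) : ℝ :=
  (1 / (m : ℝ)) * ∑ x ∈ Finset.univ.filter (fun x => f x = true), F x

open MeasureTheory ProbabilityTheory Finset Real

section Sampling

variable {Ω : Type*} [MeasurableSpace Ω] {ν : Measure Ω} [IsProbabilityMeasure ν] {φ : Ω → ℝ}

theorem measureReal_le_sampleMean_sub_le (hφm : Measurable φ) {a b : ℝ}
    (hφ : ∀ v, φ v ∈ Set.Icc a b) (n : ℕ) {ε : ℝ} (hε : 0 ≤ ε) :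
    (Measure.pi fun _ : Fin n ↦ ν).real {ω | ε ≤ (∑ j, φ (ω j)) / n - ν[φ]}
      ≤ exp (-2 * ε ^ 2 * n / (b - a) ^ 2) := by
  rcases n.eq_zero_or_pos with rfl | hn
  · simp
  have hn' : (0 : ℝ) < n := by exact_mod_cast hn
  have hsubG (j : Fin n) : HasSubgaussianMGF ((fun v ↦ φ v - ν[φ]) ∘ fun ω : Fin n → Ω ↦ ω j)
      ((‖b - a‖₊ / 2) ^ 2) (Measure.pi fun _ ↦ ν) := by
    refine .of_map (measurable_pi_apply j).aemeasurable ?_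
    rw [(measurePreserving_eval (fun _ ↦ ν) j).map_eq]
    exact hasSubgaussianMGF_of_mem_Icc hφm.aemeasurable (ae_of_all _ hφ)
  have hindep : iIndepFun (fun j (ω : Fin n → Ω) ↦ φ (ω j) - ν[φ]) (Measure.pi fun _ ↦ ν) :=
    iIndepFun_pi (X := fun _ v ↦ φ v - ν[φ]) fun _ ↦ (hφm.sub_const _).aemeasurable
  have hset : {ω : Fin n → Ω | ε ≤ (∑ j, φ (ω j)) / n - ν[φ]}
      = {ω | ε * n ≤ ∑ j, (φ (ω j) - ν[φ])} := by
    ext ω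
    simp only [Set.mem_ofPred_eq, sum_sub_distrib, sum_const, card_univ, Fintype.card_fin,
      nsmul_eq_mul]
    rw [le_sub_iff_add_le, le_div_iff₀ hn']
    constructor <;> intro h <;> linarith
  rw [hset]
  refine (HasSubgaussianMGF.measure_sum_ge_le_of_iIndepFun hindep (fun j _ ↦ hsubG j)
    (by positivity)).trans_eq ?_
  congr 1
  push_cast [sum_const, card_univ, Fintype.card_fin, nsmul_eq_mul, div_pow, Real.norm_eq_abs,
    sq_abs]
  field_simp

theorem measureReal_le_abs_sub_sampleMean_le (hφm : Measurable φ)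
    (hφ : ∀ v, φ v ∈ Set.Icc 0 1) (n : ℕ) {ε : ℝ} (hε : 0 ≤ ε) :
    (Measure.pi fun _ : Fin n ↦ ν).real {ω | ε ≤ |ν[φ] - (∑ j, φ (ω j)) / n|}
      ≤ 2 * exp (-2 * ε ^ 2 * n) := by
  have hupper : (Measure.pi fun _ : Fin n ↦ ν).real {ω | ε ≤ (∑ j, φ (ω j)) / n - ν[φ]}
      ≤ exp (-2 * ε ^ 2 * n) := by
    simpa using measureReal_le_sampleMean_sub_le (ν := ν) hφm hφ n hε
  have hlower : (Measure.pi fun _ : Fin n ↦ ν).real {ω | ε ≤ ν[φ] - (∑ j, φ (ω j)) / n}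
      ≤ exp (-2 * ε ^ 2 * n) := by
    have := measureReal_le_sampleMean_sub_le (ν := ν) (φ := fun v ↦ -φ v) hφm.neg
      (fun v ↦ ⟨neg_le_neg (hφ v).2, neg_nonpos.2 (hφ v).1⟩) n hε
    simpa [integral_neg, neg_div, neg_add_eq_sub] using this
  calc _ ≤ (Measure.pi fun _ : Fin n ↦ ν).real
        ({ω | ε ≤ (∑ j, φ (ω j)) / n - ν[φ]} ∪ {ω | ε ≤ ν[φ] - (∑ j, φ (ω j)) / n}) := by
        refine measureReal_mono fun ω (hω : ε ≤ |_|) ↦ ?_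
        rcases le_abs.1 hω with h | h
        · exact Or.inr h
        · exact Or.inl (show ε ≤ _ by linarith)
    _ ≤ _ := (measureReal_union_le _ _).trans (by linarith)

theorem exists_forall_abs_sub_sampleMean_lt (ν : Measure Ω) [IsProbabilityMeasure ν]
    {ι : Type*} [Fintype ι] {φ : ι → Ω → ℝ} (hφm : ∀ i, Measurable (φ i))
    (hφ : ∀ i v, φ i v ∈ Set.Icc 0 1) {n : ℕ} {ε : ℝ} (hε : 0 ≤ ε)
    (hsmall : 2 * Fintype.card ι * exp (-2 * ε ^ 2 * n) < 1) :
    ∃ ω : Fin n → Ω, ∀ i, |ν[φ i] - (∑ j, φ i (ω j)) / n| < ε := by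
  by_contra! hbad
  set μ := Measure.pi fun _ : Fin n ↦ ν
  let bad i := {ω : Fin n → Ω | ε ≤ |ν[φ i] - (∑ j, φ i (ω j)) / n|}
  have hcover : Set.univ ⊆ ⋃ i, bad i := fun ω _ ↦ Set.mem_iUnion.2 (hbad ω)
  have : (1 : ℝ) ≤ 2 * Fintype.card ι * exp (-2 * ε ^ 2 * n) :=
    calc 1 = μ.real Set.univ := probReal_univ.symm
      _ ≤ ∑ i, μ.real (bad i) := (measureReal_mono hcover).trans (measureReal_iUnion_fintype_le _)
      _ ≤ ∑ _ : ι, 2 * exp (-2 * ε ^ 2 * n) := sum_le_sum fun i _ ↦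
          measureReal_le_abs_sub_sampleMean_le (hφm i) (hφ i) n hε
      _ = 2 * Fintype.card ι * exp (-2 * ε ^ 2 * n) := by simp; ring
  linarith

end Sampling

theorem two_mul_mul_exp_lt_one {k m : ℕ} {ε : ℝ} (hε : 0 < ε)
    (hm : 8 * log (2 * k) / ε ^ 2 ≤ m) : 2 * k * exp (-2 * ε ^ 2 * m) < 1 := by
  rcases k.eq_zero_or_pos with rfl | hk
  · simp
  have h2k : (1 : ℝ) < 2 * k := by
    have : (1 : ℝ) ≤ k := by exact_mod_cast hk
    linarith
  have hlog : 0 < log (2 * k) := log_pos h2k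
  have hm' : 8 * log (2 * k) ≤ ε ^ 2 * m := by
    rw [div_le_iff₀ (by positivity)] at hm
    linarith
  calc 2 * k * exp (-2 * ε ^ 2 * m) < 2 * k * exp (-log (2 * k)) := by
        gcongr
        linarith
    _ = 1 := by
        rw [exp_neg, exp_log (by linarith)]
        field_simp

theorem exists_isProbabilityMeasure_integral_option_elim {X : Type*} [Fintype X]
    [MeasurableSpace (Option X)] [MeasurableSingletonClass (Option X)] {w : X → ℝ}
    (hw : ∀ x, 0 ≤ w x) (hw1 : ∑ x, w x ≤ 1) :
    ∃ ν : Measure (Option X), IsProbabilityMeasure ν ∧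
      ∀ ψ : X → ℝ, ∫ v, v.elim 0 ψ ∂ν = ∑ x, w x * ψ x := by
  have hsum : ∑ v : Option X, ENNReal.ofReal (v.elim (1 - ∑ x, w x) w) = 1 := by
    rw [Fintype.sum_option, Option.elim_none]
    simp only [Option.elim_some]
    rw [← ENNReal.ofReal_sum_of_nonneg fun x _ ↦ hw x,
      ← ENNReal.ofReal_add (by linarith) (sum_nonneg fun x _ ↦ hw x)]
    simp
  refine ⟨(PMF.ofFintype _ hsum).toMeasure, inferInstance, fun ψ ↦ ?_⟩
  simp [PMF.integral_eq_sum, Fintype.sum_option, ENNReal.toReal_ofReal (hw _)]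

def sampleCount {X : Type*} [DecidableEq X] {n : ℕ} (ω : Fin n → Option X) (x : X) : ℕ :=
  #{j | ω j = some x}

theorem sum_sampleCount_mul {X : Type*} [Fintype X] [DecidableEq X] {n : ℕ}
    (ω : Fin n → Option X) (ψ : X → ℝ) :
    ∑ x, (sampleCount ω x : ℝ) * ψ x = ∑ j, (ω j).elim 0 ψ := by
  simp only [sampleCount, card_filter, Nat.cast_sum, Nat.cast_ite, sum_mul]
  rw [sum_comm]
  refine sum_congr rfl fun j _ ↦ ?_
  cases ω j <;> simp

theorem sum_sampleCount_le {X : Type*} [Fintype X] [DecidableEq X] {n : ℕ}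
    (ω : Fin n → Option X) : ∑ x, (sampleCount ω x : ℝ) ≤ n := by
  have := sum_sampleCount_mul ω 1
  simp only [Pi.one_apply, mul_one] at this
  rw [this]
  calc ∑ j, (ω j).elim 0 1 ≤ ∑ _ : Fin n, (1 : ℝ) := sum_le_sum fun j _ ↦ by cases ω j <;> simp
    _ = n := by simp

theorem histQuery_eq_sum_div_mul {X : Type*} [Fintype X] (m : ℕ) (f : X → Bool) (F : X → ℝ) :
    histQuery m f F = ∑ x, F x / m * (if f x then 1 else 0) := by
  simp [histQuery, sum_filter, mul_sum, div_eq_inv_mul]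

theorem fractional_histogram_near_integer_point_general {X : Type*} [Fintype X]
    (k : ℕ) (f : Fin k → X → Bool)
    (ε' : ℝ) (hε' : 0 < ε' ∧ ε' ≤ 1)
    (m : ℕ) (hm2 : 8 * Real.log (2 * k) / ε' ^ 2 ≤ (m : ℝ))
    (F : X → ℝ) (hF : (∀ x, 0 ≤ F x) ∧ ∑ x, F x ≤ (m : ℝ)) :
    ∃ G : X → ℝ, (∃ g : X → ℕ, ∀ x, G x = (g x : ℝ)) ∧
      (∀ x, 0 ≤ G x) ∧ ∑ x, G x ≤ (m : ℝ) ∧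
      ∀ i : Fin k, |histQuery m (f i) F - histQuery m (f i) G| ≤ ε' := by
  classical
  let _ : MeasurableSpace (Option X) := ⊤
  obtain ⟨hF0, hFm⟩ := hF
  obtain ⟨ν, hν, hνψ⟩ := exists_isProbabilityMeasure_integral_option_elim (w := fun x ↦ F x / m)
    (fun x ↦ div_nonneg (hF0 x) m.cast_nonneg)
    (by rw [← sum_div]; exact div_le_one_of_le₀ hFm m.cast_nonneg)
  obtain ⟨ω, hω⟩ := exists_forall_abs_sub_sampleMean_lt ν
    (φ := fun i v ↦ v.elim 0 fun x ↦ if f i x then 1 else 0) (fun i ↦ .of_discrete)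
    (fun i v ↦ by cases v <;> simp; split_ifs <;> simp) hε'.1.le
    (by simpa using two_mul_mul_exp_lt_one hε'.1 hm2)
  refine ⟨fun x ↦ sampleCount ω x, ⟨sampleCount ω, fun x ↦ rfl⟩, fun x ↦ by positivity,
    sum_sampleCount_le ω, fun i ↦ ?_⟩
  rw [histQuery_eq_sum_div_mul, histQuery_eq_sum_div_mul, ← hνψ]
  simp only [div_mul_eq_mul_div, ← sum_div, sum_sampleCount_mul]
  exact (hω i).le

/-- **Lemma 9 (spacePartitionLemma).** Let `C₀ = {F ∈ ℝ^X : F ≥ 0, ∑_x F_x ≤ m}` be the set of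
fractional histograms, where `m ≥ 8·ln(2k)/ε′²`.  Every `F ∈ C₀` is `ε′`-close, in every one of
the `k` query values, to a point `G ∈ C₀` all of whose coordinates are nonnegative integers. -/
theorem fractional_histogram_near_integer_point {X : Type*} [Fintype X]
    (hN : 1 ≤ Fintype.card X)
    (k : ℕ) (hk : 1 ≤ k) (f : Fin k → X → Bool)
    (ε' : ℝ) (hε' : 0 < ε' ∧ ε' ≤ 1)
    (m : ℕ) (hm : 0 < m) (hm2 : 8 * Real.log (2 * k) / ε' ^ 2 ≤ (m : ℝ))
    (F : X → ℝ) (hF : (∀ x, 0 ≤ F x) ∧ ∑ x, F x ≤ (m : ℝ)) :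
    ∃ G : X → ℝ, (∃ g : X → ℕ, ∀ x, G x = (g x : ℝ)) ∧
      (∀ x, 0 ≤ G x) ∧ ∑ x, G x ≤ (m : ℝ) ∧
      ∀ i : Fin k, |histQuery m (f i) F - histQuery m (f i) G| ≤ ε' :=
  fractional_histogram_near_integer_point_general k f ε' hε' m hm2 F hF
end

section
/- Let X be a finite set with N = |X| ≥ 2, let f_1,…,f_k : X → {0,1} be predicates with k ≥ 1, let ε ∈ (0,1), let m be a positive integer, and let d_1,…,d_k ∈ ℝ (the true query answers). Let C_0 = {F ∈ ℝ^X : F_x ≥ 0 for all x and ∑_x F_x ≤ m} and for F ∈ C_0 let f_i(F) = (1/m)·∑_{x : f_i(x)=1} F_x. Assume the volume condition Vol({F ∈ C_0 : |f_i(F) − d_i| ≤ ε/100 for all i}) ≥ Vol(C_0)/N^{2m}, where Vol is Lebesgue measure on ℝ^X. Let H ⊆ {1,…,k} and for each i ∈ H let a_i ∈ ℝ satisfy |d_i − a_i| ≤ ε/100. Define inductively C_i = {F ∈ C_{i−1} : |f_i(F) − a_i| ≤ ε/50} for i ∈ H and C_i = C_{i−1} for i ∉ H. Assume that for every i ∈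 H, (1/Vol(C_{i−1}))·∫_{C_{i−1}} exp(−|f_i(F) − d_i|/ε) dF < 91/100. Then #H < 40·m·ln N. -/
/-! Each hard query shrinks the volume of the consistent polytope by the factor `91/97`: on `C i`
the answer is within `3ε/100` of `d i`, so the integrand of the easiness score is at least
`exp (-3/100) ≥ 97/100` there, while the score bounds its integral over `C (i-1)` by
`91/100 · Vol (C (i-1))`. The good set lies in every `C i`, hence
`Vol C₀ / N^{2m} ≤ Vol C_k ≤ (91/97)^{|H|} Vol C₀`, and `log (97/91) ≥ 6/97` gives
`|H| ≤ (97/3) m log N < 40 m log N`. -/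

open MeasureTheory

open Finset Real

@[fun_prop]
theorem continuous_histQuery {X : Type*} [Fintype X] (m : ℕ) (f : X → Bool) :
    Continuous (histQuery m f) := by
  unfold histQuery
  fun_prop

section HistPolytope

variable (X : Type*) [Fintype X]

def histPolytope (m : ℝ) : Set (X → ℝ) := {F | (∀ x, 0 ≤ F x) ∧ ∑ x, F x ≤ m}

theorem measurableSet_histPolytope (m : ℝ) : MeasurableSet (histPolytope X m) := by
  unfold histPolytope
  measurability

theorem volume_histPolytope_ne_top (m : ℝ) : volume (histPolytope X m) ≠ ⊤ := by
  have hbox : histPolytope X m ⊆ Set.univ.pi fun _ => Set.Icc 0 m := fun F ⟨hF0, hFm⟩ x _ =>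
    ⟨hF0 x, (single_le_sum (fun y _ => hF0 y) (mem_univ x)).trans hFm⟩
  refine measure_ne_top_of_subset hbox ?_
  rw [volume_pi_pi]
  simp

theorem volume_histPolytope_pos [Nonempty X] {m : ℝ} (hm : 0 < m) :
    0 < volume (histPolytope X m) := by
  have hbox : Set.univ.pi (fun _ => Set.Icc 0 (m / Fintype.card X)) ⊆ histPolytope X m :=
    fun F hF => ⟨fun x => (hF x (Set.mem_univ x)).1, calc
      ∑ x, F x ≤ ∑ _x : X, m / Fintype.card X := sum_le_sum fun x _ => (hF x (Set.mem_univ x)).2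
      _ = m := by rw [sum_const, card_univ, nsmul_eq_mul]; field_simp⟩
  refine lt_of_lt_of_le ?_ (measure_mono hbox)
  rw [volume_pi_pi, prod_const, Real.volume_Icc, sub_zero]
  have : 0 < m / Fintype.card X := div_pos hm (by exact_mod_cast Fintype.card_pos)
  exact ENNReal.pow_pos (ENNReal.ofReal_pos.2 this) _

end HistPolytope

theorem eq_inter_setOf_of_mem_iff {α : Type*} {C : ℕ → Set α} {p : ℕ → α → Prop} {k : ℕ}
    (hC : ∀ i ∈ Icc 1 k, ∀ F, F ∈ C i ↔ F ∈ C (i - 1) ∧ p i F) :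
    ∀ n ≤ k, C n = C 0 ∩ {F | ∀ i ∈ Icc 1 n, p i F} := by
  intro n hn
  induction n with
  | zero => simp
  | succ n ih =>
    ext F
    rw [hC (n + 1) (mem_Icc.2 ⟨by omega, hn⟩), add_tsub_cancel_right, ih (by omega),
      ← insert_Icc_right_eq_Icc_add_one (by omega)]
    simp only [Set.mem_inter_iff, Set.mem_ofPred_eq, forall_mem_insert]
    tauto

theorem le_prod_Icc_mul_of_le_mul {v c : ℕ → ℝ} {k : ℕ} (hc : ∀ i ∈ Icc 1 k, 0 ≤ c i)
    (hv : ∀ i ∈ Icc 1 k, v i ≤ c i * v (i - 1)) : v k ≤ (∏ i ∈ Icc 1 k, c i) * v 0 := by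
  induction k with
  | zero => simp
  | succ n ih =>
    have hsub : Icc 1 n ⊆ Icc 1 (n + 1) := Icc_subset_Icc_right n.le_succ
    have hlast : n + 1 ∈ Icc 1 (n + 1) := mem_Icc.2 ⟨by omega, le_rfl⟩
    calc v (n + 1) ≤ c (n + 1) * v n := hv _ hlast
      _ ≤ c (n + 1) * ((∏ i ∈ Icc 1 n, c i) * v 0) :=
        mul_le_mul_of_nonneg_left (ih (fun i hi => hc i (hsub hi)) fun i hi => hv i (hsub hi))
          (hc _ hlast)
      _ = (∏ i ∈ Icc 1 (n + 1), c i) * v 0 := by rw [prod_Icc_succ_top (by omega)]; ring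

theorem one_sub_le_exp_neg_abs_div {x ε δ : ℝ} (hε : 0 < ε) (hx : |x| ≤ δ * ε) :
    1 - δ ≤ exp (-|x| / ε) := by
  have : |x| / ε ≤ δ := (div_le_iff₀ hε).2 hx
  calc 1 - δ ≤ -|x| / ε + 1 := by rw [neg_div]; linarith
    _ ≤ exp (-|x| / ε) := add_one_le_exp _

theorem mul_measureReal_le_of_average_lt {α : Type*} [MeasurableSpace α] {μ : Measure α}
    {s t : Set α} {g : α → ℝ} {b c : ℝ} (hts : t ⊆ s) (ht : MeasurableSet t) (hs : μ s ≠ ⊤)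
    (hg : IntegrableOn g s μ) (hg0 : ∀ x, 0 ≤ g x) (hct : ∀ x ∈ t, c ≤ g x)
    (havg : 1 / μ.real s * ∫ x in s, g x ∂μ < b) : c * μ.real t ≤ b * μ.real s := by
  rcases (measureReal_nonneg (μ := μ) (s := s)).eq_or_lt with h0 | hpos
  · have : μ.real t = 0 := le_antisymm (h0 ▸ measureReal_mono hts hs) measureReal_nonneg
    simp [this, ← h0]
  · rw [one_div, inv_mul_lt_iff₀ hpos] at havg
    calc c * μ.real t ≤ ∫ x in t, g x ∂μ :=
          setIntegral_ge_of_const_le_real ht (measure_ne_top_of_subset hts hs) hct (hg.mono_set hts)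
      _ ≤ ∫ x in s, g x ∂μ := setIntegral_mono_set hg (ae_of_all _ hg0) hts.eventuallyLE
      _ ≤ b * μ.real s := by linarith

theorem measureReal_le_of_easiness_lt {α : Type*} [MeasurableSpace α] {μ : Measure α}
    {s t : Set α} {q : α → ℝ} {a d ε : ℝ} (hq : Measurable q) (hε : 0 < ε) (hts : t ⊆ s)
    (ht : MeasurableSet t) (hs : μ s ≠ ⊤) (hda : |d - a| ≤ ε / 100)
    (hqt : ∀ F ∈ t, |q F - a| ≤ ε / 50)
    (hscore : 1 / μ.real s * ∫ F in s, exp (-|q F - d| / ε) ∂μ < 91 / 100) :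
    μ.real t ≤ 91 / 97 * μ.real s := by
  have hint : IntegrableOn (fun F => exp (-|q F - d| / ε)) s μ := by
    refine Measure.integrableOn_of_bounded hs (by fun_prop) (M := 1) (ae_of_all _ fun F => ?_)
    rw [norm_of_nonneg (exp_nonneg _), exp_le_one_iff]
    exact div_nonpos_of_nonpos_of_nonneg (neg_nonpos.2 (abs_nonneg _)) hε.le
  have hlow : ∀ F ∈ t, 1 - 3 / 100 ≤ exp (-|q F - d| / ε) := fun F hF =>
    one_sub_le_exp_neg_abs_div hε <| by
      linarith [abs_sub_le (q F) a d, abs_sub_comm d a, hqt F hF]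
  have := mul_measureReal_le_of_average_lt hts ht hs hint (fun _ => exp_nonneg _) hlow hscore
  linarith

theorem lt_mul_log_of_inv_pow_le {N : ℝ} (hN : 1 < N) {m h : ℕ} (hm : 0 < m)
    (hle : (N ^ (2 * m))⁻¹ ≤ (91 / 97 : ℝ) ^ h) : (h : ℝ) < 40 * m * log N := by
  have hlog := log_le_log (by positivity) hle
  rw [log_inv, log_pow, log_pow] at hlog
  have hr : log (91 / 97 : ℝ) ≤ -(6 / 97) := by
    linarith [log_le_sub_one_of_pos (by norm_num : (0 : ℝ) < 91 / 97)]
  have hmlog : 0 < (m : ℝ) * log N := mul_pos (by exact_mod_cast hm) (log_pos hN)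
  push_cast at hlog
  nlinarith [mul_le_mul_of_nonneg_left hr (Nat.cast_nonneg (α := ℝ) h)]

theorem measureReal_le_pow_card_mul_of_easiness_lt {α : Type*} [MeasurableSpace α]
    {μ : Measure α} {C : ℕ → Set α} {q : ℕ → α → ℝ} {a d : ℕ → ℝ} {ε : ℝ} {k : ℕ}
    {H : Finset ℕ} (hq : ∀ i, Measurable (q i)) (hε : 0 < ε) (hH : H ⊆ Icc 1 k)
    (hmeas : ∀ n ≤ k, MeasurableSet (C n)) (hfin : ∀ n ≤ k, μ (C n) ≠ ⊤)
    (ha : ∀ i ∈ H, |d i - a i| ≤ ε / 100)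
    (hCstep : ∀ i ∈ Icc 1 k, ∀ F, F ∈ C i ↔ F ∈ C (i - 1) ∧ (i ∈ H → |q i F - a i| ≤ ε / 50))
    (hscore : ∀ i ∈ H,
      1 / μ.real (C (i - 1)) * ∫ F in C (i - 1), exp (-|q i F - d i| / ε) ∂μ < 91 / 100) :
    μ.real (C k) ≤ (91 / 97) ^ #H * μ.real (C 0) := by
  have hstep : ∀ i ∈ Icc 1 k,
      μ.real (C i) ≤ (if i ∈ H then 91 / 97 else 1) * μ.real (C (i - 1)) := by
    intro i hi
    have hsub : C i ⊆ C (i - 1) := fun F hF => ((hCstep i hi F).1 hF).1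
    have hik := (mem_Icc.1 hi).2
    split_ifs with hiH
    · exact measureReal_le_of_easiness_lt (hq i) hε hsub (hmeas i hik) (hfin _ (by omega))
        (ha i hiH) (fun F hF => ((hCstep i hi F).1 hF).2 hiH) (hscore i hiH)
    · simpa using measureReal_mono hsub (hfin _ (by omega))
  have := le_prod_Icc_mul_of_le_mul (fun i _ => by split_ifs <;> norm_num) hstep
  rwa [prod_ite_mem, inter_eq_right.2 hH, prod_const] at this

theorem few_hard_queries_efficient_general {X : Type*} [Fintype X] (hN : 2 ≤ Fintype.card X)
    (k : ℕ) (f : ℕ → X → Bool)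
    (ε : ℝ) (hε : 0 < ε ∧ ε < 1)
    (m : ℕ) (hm : 0 < m)
    (d : ℕ → ℝ)
    (C : ℕ → Set (X → ℝ))
    (hC0 : C 0 = {F : X → ℝ | (∀ x, 0 ≤ F x) ∧ ∑ x, F x ≤ (m : ℝ)})
    (hvol : volume (C 0) / (Fintype.card X : ENNReal) ^ (2 * m) ≤
      volume {F ∈ C 0 | ∀ i ∈ Finset.Icc 1 k, |histQuery m (f i) F - d i| ≤ ε / 100})
    (H : Finset ℕ) (hH : H ⊆ Finset.Icc 1 k)
    (a : ℕ → ℝ) (ha : ∀ i ∈ H, |d i - a i| ≤ ε / 100)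
    (hCstep : ∀ i ∈ Finset.Icc 1 k, ∀ F : X → ℝ,
      F ∈ C i ↔ F ∈ C (i - 1) ∧ (i ∈ H → |histQuery m (f i) F - a i| ≤ ε / 50))
    (hscore : ∀ i ∈ H,
      (1 / (volume (C (i - 1))).toReal) *
          ∫ F in C (i - 1), Real.exp (-|histQuery m (f i) F - d i| / ε)
        < 91 / 100) :
    (H.card : ℝ) < 40 * (m : ℝ) * Real.log (Fintype.card X) := by
  have : Nonempty X := Fintype.card_pos_iff.mp (by omega)
  have hC0' : C 0 = histPolytope X m := hC0
  have hCn := eq_inter_setOf_of_mem_iff hCstep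
  have hmeas : ∀ n ≤ k, MeasurableSet (C n) := fun n hn => by
    rw [hCn n hn, hC0']
    exact (measurableSet_histPolytope X m).inter <| measurableSet_setOfPred.2 <|
      .forall fun i => .forall fun _ => measurable_const.imp <|
        measurableSet_setOfPred.1 (measurableSet_le (by fun_prop) measurable_const)
  have hfin : ∀ n ≤ k, volume (C n) ≠ ⊤ := fun n hn => measure_ne_top_of_subset
    ((hCn n hn).trans_subset Set.inter_subset_left) (hC0' ▸ volume_histPolytope_ne_top X m)
  have hshrink := measureReal_le_pow_card_mul_of_easiness_lt
    (fun i => (continuous_histQuery m (f i)).measurable) hε.1 hH hmeas hfin ha hCstep hscore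
  have hgood : volume.real (C 0) / Fintype.card X ^ (2 * m) ≤ volume.real (C k) := by
    have hGk : {F ∈ C 0 | ∀ i ∈ Icc 1 k, |histQuery m (f i) F - d i| ≤ ε / 100} ⊆ C k := by
      rw [hCn k le_rfl]
      exact fun F ⟨hF0, hFd⟩ => ⟨hF0, fun i hi hiH => by
        linarith [abs_sub_le (histQuery m (f i) F) (d i) (a i), hFd i hi, ha i hiH]⟩
    have := ENNReal.toReal_mono (hfin k le_rfl) (hvol.trans (measure_mono hGk))
    rwa [ENNReal.toReal_div, ENNReal.toReal_pow, ENNReal.toReal_natCast] at this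
  have hpos : 0 < volume.real (C 0) := ENNReal.toReal_pos
    (hC0' ▸ (volume_histPolytope_pos X (by exact_mod_cast hm)).ne') (hfin 0 k.zero_le)
  refine lt_mul_log_of_inv_pow_le (by exact_mod_cast hN) hm ?_
  rw [← mul_le_mul_iff_of_pos_right hpos, inv_mul_eq_div]
  exact hgood.trans hshrink

/-- **Deterministic content of Lemma 11 (fewDiscountsEfficient).** Queries are indexed by
`1,…,k` with true answers `d i`; `C 0 = {F ∈ ℝ^X : F ≥ 0, ∑_x F_x ≤ m}` is the polytope of
fractional histograms, `H ⊆ {1,…,k}` is the set of hard queries, each answered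
`(ε/100)`-accurately by `a i`, and `C i` is obtained from `C (i−1)` by intersecting with the
`(ε/50)`-consistency constraint for hard `i` (and `C i = C (i−1)` otherwise).  Assume the
volume condition `Vol({F ∈ C₀ : |f_i(F) − d_i| ≤ ε/100 ∀i}) ≥ Vol(C₀)/N^{2m}` and that every
hard query has easiness score `(1/Vol(C_{i−1})) · ∫_{C_{i−1}} exp(−|f_i(F) − d_i|/ε) dF`
below `91/100`.  Then the number of hard queries is less than `40·m·ln N`. -/
theorem few_hard_queries_efficient {X : Type*} [Fintype X] (hN : 2 ≤ Fintype.card X)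
    (k : ℕ) (hk : 1 ≤ k) (f : ℕ → X → Bool)
    (ε : ℝ) (hε : 0 < ε ∧ ε < 1)
    (m : ℕ) (hm : 0 < m)
    (d : ℕ → ℝ)
    (C : ℕ → Set (X → ℝ))
    (hC0 : C 0 = {F : X → ℝ | (∀ x, 0 ≤ F x) ∧ ∑ x, F x ≤ (m : ℝ)})
    (hvol : volume (C 0) / (Fintype.card X : ENNReal) ^ (2 * m) ≤
      volume {F ∈ C 0 | ∀ i ∈ Finset.Icc 1 k, |histQuery m (f i) F - d i| ≤ ε / 100})
    (H : Finset ℕ) (hH : H ⊆ Finset.Icc 1 k)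
    (a : ℕ → ℝ) (ha : ∀ i ∈ H, |d i - a i| ≤ ε / 100)
    (hCstep : ∀ i ∈ Finset.Icc 1 k, ∀ F : X → ℝ,
      F ∈ C i ↔ F ∈ C (i - 1) ∧ (i ∈ H → |histQuery m (f i) F - a i| ≤ ε / 50))
    (hscore : ∀ i ∈ H,
      (1 / (volume (C (i - 1))).toReal) *
          ∫ F in C (i - 1), Real.exp (-|histQuery m (f i) F - d i| / ε)
        < 91 / 100) :
    (H.card : ℝ) < 40 * (m : ℝ) * Real.log (Fintype.card X) :=
  few_hard_queries_efficient_general hN k f ε hε m hm d C hC0 hvol H hH a ha hCstep hscore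
end

section
/- Let d ≥ 1 be an integer and let K = {x ∈ ℝ^d : x_i ≥ 0 for all i and ∑_{i=1}^d x_i ≤ 1} be the solid standard simplex. Then (1/Vol(K))·∫_K (∑_{i=1}^d x_i²)/(∑_{i=1}^d x_i)² dx = 2/(d+1). (The integrand is defined almost everywhere on K.) -/
/-!
Weight the orthant `x ≥ 0` by `e^{-∑ xᵢ}`. If `f` is invariant under positive scaling, Tonelli
together with `vol (t • K) = t^d vol K` gives
`∫_{x ≥ 0} f x · Γ(n + 1, ∑ xᵢ) dx = (n + d)! ∫_K f`, where `Γ(n + 1, s) = ∫_s^∞ tⁿ e^{-t} dt`.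
For `f = 1` and `n = 0` the left side is `∫_{x ≥ 0} e^{-∑ xᵢ} = 1`, so `vol K = 1 / d!`.
Since `Γ(n + 2, s) = s^{n+1} e^{-s} + (n + 1) Γ(n + 1, s)`, the case `n = 1` also controls
`∫_{x ≥ 0} f x (∑ xᵢ)² e^{-∑ xᵢ}`; for `f = ∑ xᵢ² / (∑ xᵢ)²` this integral is
`∑ᵢ ∫_{x ≥ 0} xᵢ² e^{-∑ xⱼ} = 2d` by Fubini, whence `d · (d + 1)! ∫_K f = 2d`.
-/

open MeasureTheory Set Real ENNReal Module
open scoped Pointwise Nat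

section Scaling

variable {E : Type*} [NormedAddCommGroup E] [NormedSpace ℝ E] [MeasurableSpace E] [BorelSpace E]
  [FiniteDimensional ℝ E] (μ : Measure E) [μ.IsAddHaarMeasure]

theorem setLIntegral_smul_set {r : ℝ} (hr : 0 < r) (s : Set E) (f : E → ℝ≥0∞) :
    ∫⁻ x in r • s, f x ∂μ = ENNReal.ofReal (r ^ finrank ℝ E) * ∫⁻ x in s, f (r • x) ∂μ := by
  let e := MeasurableEquiv.smul₀ (α := E) r hr.ne'
  have hr' : 0 < r ^ finrank ℝ E := pow_pos hr _
  have hμ : μ = ENNReal.ofReal (r ^ finrank ℝ E) • Measure.map e μ := by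
    rw [show ⇑e = (r • ·) from rfl, Measure.map_addHaar_smul μ hr.ne', smul_smul,
      ← ENNReal.ofReal_mul hr'.le, abs_of_pos (inv_pos.2 hr'), mul_inv_cancel₀ hr'.ne',
      ENNReal.ofReal_one, one_smul]
  have hpre : e ⁻¹' (r • s) = s := by
    ext x; exact smul_mem_smul_set_iff₀ hr.ne' s x
  conv_lhs => rw [hμ]
  rw [Measure.restrict_smul, lintegral_smul_measure, e.restrict_map, hpre, lintegral_map_equiv]
  rfl

end Scaling

theorem integrableOn_pow_mul_exp_neg_Ioi (n : ℕ) {s : ℝ} (hs : 0 ≤ s) :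
    IntegrableOn (fun t : ℝ => t ^ n * exp (-t)) (Ioi s) := by
  refine ((GammaIntegral_convergent (s := n + 1) (by positivity)).mono_set
    (Ioi_subset_Ioi hs)).congr_fun (fun t _ => ?_) measurableSet_Ioi
  dsimp only
  rw [add_sub_cancel_right, Real.rpow_natCast, mul_comm]

theorem integral_Ioi_zero_pow_mul_exp_neg (n : ℕ) :
    ∫ t in Ioi (0 : ℝ), t ^ n * exp (-t) = n ! := by
  rw [← Gamma_nat_eq_factorial, Gamma_eq_integral (by positivity)]
  refine setIntegral_congr_fun measurableSet_Ioi fun t _ => ?_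
  rw [add_sub_cancel_right, Real.rpow_natCast, mul_comm]

theorem integral_Ioi_pow_succ_mul_exp_neg (n : ℕ) {s : ℝ} (hs : 0 ≤ s) :
    ∫ t in Ioi s, t ^ (n + 1) * exp (-t) =
      s ^ (n + 1) * exp (-s) + (n + 1) * ∫ t in Ioi s, t ^ n * exp (-t) := by
  have hderiv (t : ℝ) : HasDerivAt (fun t => -(t ^ (n + 1) * exp (-t)))
      (t ^ (n + 1) * exp (-t) - (n + 1) * (t ^ n * exp (-t))) t := by
    refine ((hasDerivAt_pow (n + 1) t).mul (hasDerivAt_neg t).exp).neg.congr_deriv ?_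
    rw [Nat.add_sub_cancel]
    push_cast
    ring
  have hftc := integral_Ioi_of_hasDerivAt_of_tendsto' (fun t _ => hderiv t)
    ((integrableOn_pow_mul_exp_neg_Ioi (n + 1) hs).sub
      ((integrableOn_pow_mul_exp_neg_Ioi n hs).const_mul _))
    (by simpa using (tendsto_pow_mul_exp_neg_atTop_nhds_zero (n + 1)).neg)
  rw [integral_sub (integrableOn_pow_mul_exp_neg_Ioi (n + 1) hs)
    ((integrableOn_pow_mul_exp_neg_Ioi n hs).const_mul _), integral_const_mul] at hftc
  linarith

theorem lintegral_Ioi_pow_mul_exp_neg (n : ℕ) {s : ℝ} (hs : 0 ≤ s) :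
    ∫⁻ t in Ioi s, ENNReal.ofReal (t ^ n * exp (-t)) =
      ENNReal.ofReal (∫ t in Ioi s, t ^ n * exp (-t)) := by
  rw [ofReal_integral_eq_lintegral_ofReal (integrableOn_pow_mul_exp_neg_Ioi n hs)]
  exact (ae_restrict_mem measurableSet_Ioi).mono fun t ht => by
    have : 0 ≤ t := hs.trans ht.out.le
    positivity

theorem lintegral_Ici_exp_neg {s : ℝ} :
    ∫⁻ t in Ici s, ENNReal.ofReal (exp (-t)) = ENNReal.ofReal (exp (-s)) := by
  rw [setLIntegral_congr Ioi_ae_eq_Ici.symm, ← ofReal_integral_eq_lintegral_ofReal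
    (integrableOn_exp_neg_Ioi s) (ae_of_all _ fun t => (exp_pos _).le), integral_exp_neg_Ioi]

theorem lintegral_Ici_pow_succ_mul_exp_neg (n : ℕ) {s : ℝ} (hs : 0 ≤ s) :
    ∫⁻ t in Ici s, ENNReal.ofReal (t ^ (n + 1) * exp (-t)) =
      ENNReal.ofReal (s ^ (n + 1) * exp (-s)) +
        (n + 1) * ∫⁻ t in Ici s, ENNReal.ofReal (t ^ n * exp (-t)) := by
  have hI : 0 ≤ ∫ t in Ioi s, t ^ n * exp (-t) :=
    setIntegral_nonneg measurableSet_Ioi fun t ht => by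
      have : 0 ≤ t := hs.trans ht.out.le
      positivity
  rw [setLIntegral_congr Ioi_ae_eq_Ici.symm, setLIntegral_congr Ioi_ae_eq_Ici.symm,
    lintegral_Ioi_pow_mul_exp_neg _ hs, lintegral_Ioi_pow_mul_exp_neg _ hs,
    integral_Ioi_pow_succ_mul_exp_neg n hs, ENNReal.ofReal_add (by positivity) (by positivity),
    ENNReal.ofReal_mul (p := (n : ℝ) + 1) (by positivity)]
  norm_cast

theorem lintegral_Ioi_zero_pow_mul_pow_mul_exp_neg (m n : ℕ) :
    ∫⁻ t in Ioi 0, ENNReal.ofReal (t ^ m) * ENNReal.ofReal (t ^ n * exp (-t)) = (n + m)! := by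
  have h_merge : ∀ t ∈ Ioi (0 : ℝ), ENNReal.ofReal (t ^ m) * ENNReal.ofReal (t ^ n * exp (-t)) =
      ENNReal.ofReal (t ^ (n + m) * exp (-t)) := fun t ht => by
    rw [← ENNReal.ofReal_mul (pow_nonneg ht.out.le _), pow_add, mul_left_comm, mul_assoc]
  rw [setLIntegral_congr_fun measurableSet_Ioi h_merge, lintegral_Ioi_pow_mul_exp_neg _ le_rfl,
    integral_Ioi_zero_pow_mul_exp_neg, ENNReal.ofReal_natCast]

variable {ι : Type*} [Fintype ι]

def nonnegOrthant (ι : Type*) : Set (ι → ℝ) := univ.pi fun _ => Ici 0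

def solidSimplex (ι : Type*) [Fintype ι] (t : ℝ) : Set (ι → ℝ) :=
  nonnegOrthant ι ∩ {x | ∑ i, x i ≤ t}

theorem measurableSet_nonnegOrthant : MeasurableSet (nonnegOrthant ι) :=
  .univ_pi fun _ => measurableSet_Ici

theorem sum_nonneg_of_mem_nonnegOrthant {x : ι → ℝ} (hx : x ∈ nonnegOrthant ι) :
    0 ≤ ∑ i, x i :=
  Finset.sum_nonneg fun i _ => hx i (mem_univ i)

theorem solidSimplex_eq_empty {t : ℝ} (ht : t < 0) : solidSimplex ι t = ∅ :=
  eq_empty_of_forall_notMem fun _ hx =>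
    (ht.trans_le (sum_nonneg_of_mem_nonnegOrthant hx.1)).not_ge hx.2

theorem solidSimplex_eq_smul {t : ℝ} (ht : 0 < t) : solidSimplex ι t = t • solidSimplex ι 1 := by
  ext x
  rw [mem_smul_set_iff_inv_smul_mem₀ ht.ne']
  simp only [solidSimplex, nonnegOrthant, mem_inter_iff, mem_pi, mem_univ, mem_Ici,
    forall_const, mem_ofPred_eq, Pi.smul_apply, smul_eq_mul, ← Finset.mul_sum,
    inv_mul_le_one₀ ht, inv_pos.2 ht, mul_nonneg_iff_of_pos_left]

theorem setLIntegral_solidSimplex_of_homogeneous {f : (ι → ℝ) → ℝ≥0∞}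
    (hf : ∀ c : ℝ, 0 < c → ∀ x, f (c • x) = f x) {t : ℝ} (ht : 0 < t) :
    ∫⁻ x in solidSimplex ι t, f x =
      ENNReal.ofReal (t ^ Fintype.card ι) * ∫⁻ x in solidSimplex ι 1, f x := by
  simp only [solidSimplex_eq_smul ht, setLIntegral_smul_set volume ht, hf t ht,
    finrank_fintype_fun_eq_card]

theorem lintegral_nonnegOrthant_mul_tail {f : (ι → ℝ) → ℝ≥0∞} (hf_meas : Measurable f)
    (hf : ∀ c : ℝ, 0 < c → ∀ x, f (c • x) = f x) {h : ℝ → ℝ≥0∞} (hh : Measurable h) :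
    ∫⁻ x in nonnegOrthant ι, f x * ∫⁻ t in Ici (∑ i, x i), h t =
      (∫⁻ x in solidSimplex ι 1, f x) *
        ∫⁻ t in Ioi 0, ENNReal.ofReal (t ^ Fintype.card ι) * h t := by
  set C := ∫⁻ x in solidSimplex ι 1, f x
  let F : (ι → ℝ) → ℝ → ℝ≥0∞ := fun x t => if ∑ i, x i ≤ t then f x * h t else 0
  have hF : Measurable (Function.uncurry F) :=
    Measurable.ite (measurableSet_le (by fun_prop) measurable_snd)
      ((hf_meas.comp measurable_fst).mul (hh.comp measurable_snd)) measurable_const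
  have h_tail (x : ι → ℝ) : f x * ∫⁻ t in Ici (∑ i, x i), h t = ∫⁻ t, F x t := by
    rw [← lintegral_const_mul _ hh, ← lintegral_indicator measurableSet_Ici]
    rfl
  have h_slice (t : ℝ) :
      ∫⁻ x in nonnegOrthant ι, F x t = (∫⁻ x in solidSimplex ι t, f x) * h t := by
    rw [← lintegral_mul_const _ hf_meas, solidSimplex, inter_comm,
      ← Measure.restrict_restrict (measurableSet_le (by fun_prop) measurable_const),
      ← lintegral_indicator (measurableSet_le (by fun_prop) measurable_const)]
    rfl
  calc ∫⁻ x in nonnegOrthant ι, f x * ∫⁻ t in Ici (∑ i, x i), h t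
      = ∫⁻ t, ∫⁻ x in nonnegOrthant ι, F x t := by
        simp only [h_tail]; exact lintegral_lintegral_swap hF.aemeasurable
    _ = ∫⁻ t, (Ioi 0).indicator (fun t => C * (ENNReal.ofReal (t ^ Fintype.card ι) * h t)) t := by
        -- `t = 0` must be discarded: `solidSimplex ι 0 = {0}` is not null when `ι` is empty.
        refine lintegral_congr_ae ((Measure.ae_ne volume 0).mono fun t ht0 => ?_)
        dsimp only
        rw [h_slice]
        rcases ht0.lt_or_gt with ht | ht
        · rw [indicator_of_notMem (notMem_Ioi.2 ht.le), solidSimplex_eq_empty ht]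
          simp
        · rw [indicator_of_mem (mem_Ioi.2 ht), setLIntegral_solidSimplex_of_homogeneous hf ht]
          ring
    _ = C * ∫⁻ t in Ioi 0, ENNReal.ofReal (t ^ Fintype.card ι) * h t := by
        rw [lintegral_indicator measurableSet_Ioi, lintegral_const_mul _ (by fun_prop)]

theorem lintegral_nonnegOrthant_prod_pow_mul_exp_neg_sum (c : ι → ℕ) :
    ∫⁻ x in nonnegOrthant ι, ENNReal.ofReal ((∏ i, x i ^ c i) * exp (-∑ i, x i)) =
      ∏ i, ((c i)! : ℝ≥0∞) := by
  have hsplit (x : ι → ℝ) :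
      (∏ i, x i ^ c i) * exp (-∑ i, x i) = ∏ i, (x i ^ c i * exp (-x i)) := by
    rw [Finset.prod_mul_distrib, ← Finset.sum_neg_distrib, exp_sum]
  have hμ : volume.restrict (nonnegOrthant ι) = Measure.pi fun _ => volume.restrict (Ici 0) := by
    rw [nonnegOrthant, volume_pi, Measure.restrict_pi_pi]
  simp_rw [hsplit]
  rw [← ofReal_integral_eq_lintegral_ofReal, hμ,
    integral_fintype_prod_eq_prod (fun i t => t ^ c i * exp (-t))]
  · simp_rw [integral_Ici_eq_integral_Ioi, integral_Ioi_zero_pow_mul_exp_neg]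
    norm_cast
  · rw [hμ]
    exact Integrable.fintype_prod fun i =>
      (integrableOn_Ici_iff_integrableOn_Ioi (by simp)).2
        (integrableOn_pow_mul_exp_neg_Ioi _ le_rfl)
  · exact (ae_restrict_mem measurableSet_nonnegOrthant).mono fun x hx =>
      Finset.prod_nonneg fun i _ => by have : 0 ≤ x i := hx i (mem_univ i); positivity

theorem lintegral_nonnegOrthant_mul_tail_pow_mul_exp_neg {f : (ι → ℝ) → ℝ≥0∞}
    (hf_meas : Measurable f) (hf : ∀ c : ℝ, 0 < c → ∀ x, f (c • x) = f x) (n : ℕ) :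
    ∫⁻ x in nonnegOrthant ι, f x * ∫⁻ t in Ici (∑ i, x i), ENNReal.ofReal (t ^ n * exp (-t)) =
      (∫⁻ x in solidSimplex ι 1, f x) * (n + Fintype.card ι)! := by
  rw [lintegral_nonnegOrthant_mul_tail hf_meas hf (by fun_prop),
    lintegral_Ioi_zero_pow_mul_pow_mul_exp_neg]

theorem lintegral_nonnegOrthant_mul_sum_pow_succ_mul_exp_neg {f : (ι → ℝ) → ℝ≥0∞}
    (hf_meas : Measurable f) (hf : ∀ c : ℝ, 0 < c → ∀ x, f (c • x) = f x) (n : ℕ) :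
    (∫⁻ x in nonnegOrthant ι, f x * ENNReal.ofReal ((∑ i, x i) ^ (n + 1) * exp (-∑ i, x i))) +
        (n + 1) * ((∫⁻ x in solidSimplex ι 1, f x) * (n + Fintype.card ι)!) =
      (∫⁻ x in solidSimplex ι 1, f x) * (n + 1 + Fintype.card ι)! := by
  have hmeas : Measurable fun x : ι → ℝ =>
      f x * ENNReal.ofReal ((∑ i, x i) ^ (n + 1) * exp (-∑ i, x i)) := by
    fun_prop
  have h_split : ∫⁻ x in nonnegOrthant ι,
        f x * ∫⁻ t in Ici (∑ i, x i), ENNReal.ofReal (t ^ (n + 1) * exp (-t)) =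
      ∫⁻ x in nonnegOrthant ι, (f x * ENNReal.ofReal ((∑ i, x i) ^ (n + 1) * exp (-∑ i, x i)) +
        (n + 1) * (f x * ∫⁻ t in Ici (∑ i, x i), ENNReal.ofReal (t ^ n * exp (-t)))) :=
    setLIntegral_congr_fun measurableSet_nonnegOrthant fun x hx => by
      rw [lintegral_Ici_pow_succ_mul_exp_neg n (sum_nonneg_of_mem_nonnegOrthant hx)]
      ring
  rw [← lintegral_nonnegOrthant_mul_tail_pow_mul_exp_neg hf_meas hf n,
    ← lintegral_nonnegOrthant_mul_tail_pow_mul_exp_neg hf_meas hf (n + 1), h_split,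
    lintegral_add_left hmeas, lintegral_const_mul' _ _ (by finiteness)]

theorem volume_solidSimplex_one : volume (solidSimplex ι 1) = ((Fintype.card ι)! : ℝ≥0∞)⁻¹ := by
  have h := lintegral_nonnegOrthant_mul_tail_pow_mul_exp_neg (ι := ι) (f := 1) measurable_const
    (fun _ _ _ => rfl) 0
  have h_exp := lintegral_nonnegOrthant_prod_pow_mul_exp_neg_sum (ι := ι) 0
  simp only [Pi.one_apply, one_mul, pow_zero, lintegral_Ici_exp_neg, setLIntegral_one,
    zero_add] at h
  simp only [Pi.zero_apply, pow_zero, Finset.prod_const_one, one_mul, Nat.factorial_zero,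
    Nat.cast_one] at h_exp
  exact ENNReal.eq_inv_of_mul_eq_one_left (h ▸ h_exp)

noncomputable def collisionProb (x : ι → ℝ) : ℝ := (∑ i, x i ^ 2) / (∑ i, x i) ^ 2

theorem collisionProb_nonneg (x : ι → ℝ) : 0 ≤ collisionProb x := by
  unfold collisionProb; positivity

theorem collisionProb_smul {c : ℝ} (hc : c ≠ 0) (x : ι → ℝ) :
    collisionProb (c • x) = collisionProb x := by
  simp only [collisionProb, Pi.smul_apply, smul_eq_mul, mul_pow, ← Finset.mul_sum]
  exact mul_div_mul_left _ _ (pow_ne_zero 2 hc)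

theorem collisionProb_mul_sq_sum {x : ι → ℝ} (hx : x ∈ nonnegOrthant ι) :
    collisionProb x * (∑ i, x i) ^ 2 = ∑ i, x i ^ 2 := by
  by_cases hs : ∑ i, x i = 0
  · have hx0 := (Finset.sum_eq_zero_iff_of_nonneg fun i _ => hx i (mem_univ i)).1 hs
    rw [hs, Finset.sum_eq_zero fun i hi => by rw [hx0 i hi, sq, mul_zero]]
    ring
  · exact div_mul_cancel₀ _ (pow_ne_zero 2 hs)

theorem collisionProb_le_one {x : ι → ℝ} (hx : x ∈ nonnegOrthant ι) : collisionProb x ≤ 1 :=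
  div_le_one_of_le₀ (Finset.sum_sq_le_sq_sum_of_nonneg fun i _ => hx i (mem_univ i))
    (sq_nonneg _)

theorem measurable_collisionProb : Measurable (collisionProb : (ι → ℝ) → ℝ) := by
  unfold collisionProb; fun_prop

theorem lintegral_nonnegOrthant_sum_sq_mul_exp_neg_sum :
    ∫⁻ x in nonnegOrthant ι, ENNReal.ofReal ((∑ i, x i ^ 2) * exp (-∑ i, x i)) =
      2 * Fintype.card ι := by
  classical
  have h_coord (i : ι) :
      ∫⁻ x in nonnegOrthant ι, ENNReal.ofReal (x i ^ 2 * exp (-∑ j, x j)) = 2 := by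
    have h_pow (x : ι → ℝ) : ∏ j, x j ^ (Pi.single i 2 : ι → ℕ) j = x i ^ 2 := by
      rw [Fintype.prod_eq_single i fun j hj => by rw [Pi.single_eq_of_ne hj, pow_zero],
        Pi.single_eq_same]
    have h_fact : ∏ j, (((Pi.single i 2 : ι → ℕ) j)! : ℝ≥0∞) = 2 := by
      rw [Fintype.prod_eq_single i fun j hj => by
        rw [Pi.single_eq_of_ne hj, Nat.factorial_zero, Nat.cast_one], Pi.single_eq_same]
      rfl
    simpa only [h_pow, h_fact] using
      lintegral_nonnegOrthant_prod_pow_mul_exp_neg_sum (Pi.single i 2 : ι → ℕ)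
  simp_rw [Finset.sum_mul, ENNReal.ofReal_sum_of_nonneg fun i _ =>
    mul_nonneg (sq_nonneg (_ : ℝ)) (exp_pos _).le]
  rw [lintegral_finsetSum _ fun i _ => by fun_prop]
  simp [h_coord, mul_comm]

theorem lintegral_solidSimplex_collisionProb_ne_top :
    ∫⁻ x in solidSimplex ι 1, ENNReal.ofReal (collisionProb x) ≠ ⊤ := by
  refine ne_top_of_le_ne_top (b := volume (solidSimplex ι 1)) ?_ ?_
  · rw [volume_solidSimplex_one]; simp [Nat.factorial_ne_zero]
  · rw [← setLIntegral_one]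
    exact setLIntegral_mono measurable_const fun x hx =>
      ENNReal.ofReal_le_one.2 (collisionProb_le_one hx.1)

theorem lintegral_solidSimplex_collisionProb_mul_factorial [Nonempty ι] :
    (∫⁻ x in solidSimplex ι 1, ENNReal.ofReal (collisionProb x)) * (Fintype.card ι + 1)! = 2 := by
  have h := lintegral_nonnegOrthant_mul_sum_pow_succ_mul_exp_neg
    (measurable_collisionProb (ι := ι)).ennreal_ofReal
    (fun c hc x => congrArg ENNReal.ofReal (collisionProb_smul hc.ne' x)) 1
  have h_sq : ∫⁻ x in nonnegOrthant ι, ENNReal.ofReal (collisionProb x) *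
      ENNReal.ofReal ((∑ i, x i) ^ (1 + 1) * exp (-∑ i, x i)) = 2 * Fintype.card ι := by
    rw [← lintegral_nonnegOrthant_sum_sq_mul_exp_neg_sum]
    refine setLIntegral_congr_fun measurableSet_nonnegOrthant fun x hx => ?_
    rw [← ENNReal.ofReal_mul (collisionProb_nonneg x), ← mul_assoc, collisionProb_mul_sq_sum hx]
  have h_fact :
      ((1 + 1 + Fintype.card ι)! : ℝ≥0∞) = (Fintype.card ι + 1)! * (Fintype.card ι + 2) := by
    rw [show 1 + 1 + Fintype.card ι = Fintype.card ι + 1 + 1 by ring, Nat.factorial_succ]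
    push_cast; ring
  have hC := lintegral_solidSimplex_collisionProb_ne_top (ι := ι)
  have hd : (Fintype.card ι : ℝ≥0∞) ≠ 0 := by simp [Fintype.card_ne_zero]
  rw [h_sq, h_fact, add_comm 1 (Fintype.card ι), Nat.cast_one, one_add_one_eq_two] at h
  generalize ∫⁻ x in solidSimplex ι 1, ENNReal.ofReal (collisionProb x) = C at h hC ⊢
  have h' : 2 * Fintype.card ι + 2 * (C * (Fintype.card ι + 1)!) =
      Fintype.card ι * (C * (Fintype.card ι + 1)!) + 2 * (C * (Fintype.card ι + 1)!) := by
    rw [h]; ring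
  rw [ENNReal.add_left_inj (by finiteness), mul_comm,
    ENNReal.mul_right_inj hd (natCast_ne_top _)] at h'
  exact h'.symm

theorem integral_solidSimplex_collisionProb [Nonempty ι] :
    ∫ x in solidSimplex ι 1, collisionProb x = 2 / (Fintype.card ι + 1)! := by
  have hF : ((Fintype.card ι + 1)! : ℝ≥0∞) ≠ 0 := by simp [Nat.factorial_ne_zero]
  rw [integral_eq_lintegral_of_nonneg_ae (ae_of_all _ collisionProb_nonneg)
      measurable_collisionProb.aestronglyMeasurable,
    (ENNReal.eq_div_iff hF (natCast_ne_top _)).2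
      ((mul_comm _ _).trans lintegral_solidSimplex_collisionProb_mul_factorial),
    ENNReal.toReal_div, ENNReal.toReal_ofNat, ENNReal.toReal_natCast]

/-- **Collision-probability computation for Lemma 13 (goodVolumeUniform).** For the solid
standard simplex `K = {x ∈ ℝ^d : x ≥ 0, ∑ x_i ≤ 1}`, the mean over `K` of
`(∑ x_i²)/(∑ x_i)²` (defined almost everywhere) equals `2/(d+1)`: the normalized point
`x/‖x‖₁` is uniform on the probability simplex and its expected collision probability is
`2/(d+1)`. -/
theorem simplex_normalized_collision_probability (d : ℕ) (hd : 1 ≤ d) :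
    (1 / (volume {x : Fin d → ℝ | (∀ i, 0 ≤ x i) ∧ ∑ i, x i ≤ 1}).toReal) *
        ∫ x in {x : Fin d → ℝ | (∀ i, 0 ≤ x i) ∧ ∑ i, x i ≤ 1},
          (∑ i, (x i) ^ 2) / (∑ i, x i) ^ 2 =
      2 / ((d : ℝ) + 1) := by
  have : Nonempty (Fin d) := ⟨⟨0, hd⟩⟩
  have hK : {x : Fin d → ℝ | (∀ i, 0 ≤ x i) ∧ ∑ i, x i ≤ 1} = solidSimplex (Fin d) 1 := by
    ext x; simp [solidSimplex, nonnegOrthant, Pi.le_def]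
  have h_int := integral_solidSimplex_collisionProb (ι := Fin d)
  unfold collisionProb at h_int
  rw [hK, h_int, volume_solidSimplex_one, Fintype.card_fin, ENNReal.toReal_inv,
    ENNReal.toReal_natCast, Nat.factorial_succ]
  push_cast
  field_simp
end
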